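/- arXiv:2506.15042 — 3 statements merged into one kernel-verified Lean document; each statement's English description precedes it below -/
import Mathlib

section
/- Let Q_1, Q_2, Q_3 ∈ k[x,y,z] be quadratic forms and Z ⊂ P^1 × P^2 the (2,2)-divisor defined by t_0^2 Q_1 + 2 t_0 t_1 Q_2 + t_1^2 Q_3 = 0. If the plane quartic Δ = {Q_2^2 - Q_1 Q_3 = 0} is smooth, then Z is smooth. -/
/-!
STATEMENT 5 (Proposition `smoothness`, [DJK24, Lemma 2.15 (3)]): Let Q₁, Q₂, Q₃ ∈ k[x,y,z] be
quadratic forms over an algebraically closed field k of characteristic 0 and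
Z ⊂ P¹ × P² the (2,2)-divisor t₀²Q₁ + 2t₀t₁Q₂ + t₁²Q₃ = 0.  If the plane quartic
Δ = {Q₂² − Q₁Q₃ = 0} is smooth then Z is smooth.

Smoothness is expressed by the Jacobian criterion: a hypersurface defined by a (bi)homogeneous
polynomial F is smooth iff at every point of the ambient (product of) projective space(s) where
F vanishes some partial derivative of F is nonzero.  We realize the defining polynomial of Z in
k[t₀,t₁,x,y,z] = MvPolynomial (Fin 5) k (t₀ = X 0, t₁ = X 1, x = X 2, y = X 3, z = X 4) by
renaming the variables of the Qᵢ ∈ MvPolynomial (Fin 3) k.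
-/

open MvPolynomial in
theorem stmt_5 {k : Type*} [Field k] [IsAlgClosed k] [CharZero k]
    (Q1 Q2 Q3 : MvPolynomial (Fin 3) k)
    (hQ1 : Q1.IsHomogeneous 2) (hQ2 : Q2.IsHomogeneous 2) (hQ3 : Q3.IsHomogeneous 2)
    -- Δ = {Q₂² − Q₁Q₃ = 0} is smooth:
    (hΔ : ∀ p : Fin 3 → k, p ≠ 0 → eval p (Q2 ^ 2 - Q1 * Q3) = 0 →
      ∃ i : Fin 3, eval p (pderiv i (Q2 ^ 2 - Q1 * Q3)) ≠ 0)
    (emb : Fin 3 → Fin 5) (hemb : emb = fun j => ⟨j.1 + 2, by omega⟩)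
    (F : MvPolynomial (Fin 5) k)
    (hF : F = (X 0) ^ 2 * rename emb Q1 + 2 * X 0 * X 1 * rename emb Q2 +
      (X 1) ^ 2 * rename emb Q3) :
    -- then Z = {F = 0} ⊂ P¹ × P² is smooth:
    ∀ v : Fin 5 → k, (v 0, v 1) ≠ (0, 0) → (v 2, v 3, v 4) ≠ (0, 0, 0) →
      eval v F = 0 → ∃ i : Fin 5, eval v (pderiv i F) ≠ 0 := by
  intro v hv01 hv234 hvF
  by_contra hc
  push_neg at hc
  subst hF
  have hinj : Function.Injective emb := by
    subst hemb; intro a b h; simp only [Fin.mk.injEq] at h; exact Fin.ext (by omega)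
  set p : Fin 3 → k := fun j => v (emb j) with hp
  have hpne : p ≠ 0 := by
    intro h
    apply hv234
    have h0 := congrFun h 0
    have h1 := congrFun h 1
    have h2 := congrFun h 2
    subst hemb
    simp only [hp, Pi.zero_apply] at h0 h1 h2
    exact Prod.ext h0 (Prod.ext h1 h2)
  -- pderiv of renamed poly at 0 or 1 vanishes
  have hz : ∀ (Q : MvPolynomial (Fin 3) k) (i : Fin 5), (∀ j : Fin 3, emb j ≠ i) →
      pderiv i (rename emb Q) = 0 := by
    intro Q i hi
    apply pderiv_eq_zero_of_notMem_vars
    intro hmem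
    obtain ⟨j, _, hj⟩ := mem_vars_rename emb Q hmem
    exact hi j hj
  have hz1 : ∀ Q : MvPolynomial (Fin 3) k, pderiv (0 : Fin 5) (rename emb Q) = 0 := by
    intro Q; exact hz Q 0 (by subst hemb; intro j; simp only [ne_eq, Fin.ext_iff, Fin.val_zero]; omega)
  have hz2 : ∀ Q : MvPolynomial (Fin 3) k, pderiv (1 : Fin 5) (rename emb Q) = 0 := by
    intro Q; exact hz Q 1 (by subst hemb; intro j; simp [Fin.ext_iff])
  set a := v 0 with ha
  set b := v 1 with hb
  have hev : ∀ Q : MvPolynomial (Fin 3) k, eval v (rename emb Q) = eval p Q := by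
    intro Q; rw [eval_rename]; rfl
  -- partials w.r.t. t0, t1
  have h0 := hc 0
  have h1 := hc 1
  have h2C : (2 : MvPolynomial (Fin 5) k) = C 2 := by
    rw [show ((2:k) = ((2:ℕ):k)) by norm_num, C_eq_coe_nat]; norm_num
  simp only [h2C, pderiv_mul, pderiv_pow, pderiv_C, pderiv_X_self,
    pderiv_X_of_ne (show (0:Fin 5) ≠ 1 by decide), pderiv_X_of_ne (show (1:Fin 5) ≠ 0 by decide),
    hz1, hz2, mul_zero, zero_mul, add_zero, zero_add, map_add, map_mul, map_pow, eval_X, eval_C,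
    mul_one, one_mul, hev, map_natCast, Nat.cast_ofNat] at h0 h1
  norm_num at h0 h1
  -- h0 : 2 * a * eval p Q1 + 2 * b * eval p Q2 = 0
  -- h1 : 2 * a * eval p Q2 + 2 * b * eval p Q3 = 0
  have hne0 : ∀ j : Fin 3, (0 : Fin 5) ≠ emb j := by
    subst hemb; intro j; simp only [ne_eq, Fin.ext_iff, Fin.val_zero]; omega
  have hne1 : ∀ j : Fin 3, (1 : Fin 5) ≠ emb j := by
    subst hemb; intro j; simp only [ne_eq, Fin.ext_iff, Fin.val_one]; omega
  have hji : ∀ i : Fin 3, a ^ 2 * eval p (pderiv i Q1) + 2 * a * b * eval p (pderiv i Q2)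
      + b ^ 2 * eval p (pderiv i Q3) = 0 := by
    intro i
    have h := hc (emb i)
    simp only [h2C, pderiv_mul, pderiv_pow, pderiv_C, pderiv_rename hinj,
      pderiv_X_of_ne (hne0 i), pderiv_X_of_ne (hne1 i),
      mul_zero, zero_mul, add_zero, zero_add, map_add, map_mul, map_pow, eval_X, eval_C,
      mul_one, one_mul, hev, map_natCast, Nat.cast_ofNat] at h
    norm_num at h
    linear_combination h
  set q1 := eval p Q1
  set q2 := eval p Q2
  set q3 := eval p Q3
  have hab : a ≠ 0 ∨ b ≠ 0 := by
    by_contra h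
    push_neg at h
    exact hv01 (Prod.ext h.1 h.2)
  have hS : q2 ^ 2 - q1 * q3 = 0 := by
    rcases hab with h | h
    · have : a ^ 2 * (q2 ^ 2 - q1 * q3) = 0 := by linear_combination (a * q2 / 2) * h1 - (a * q3 / 2) * h0
      rcases mul_eq_zero.mp this with h' | h'
      · exact absurd h' (pow_ne_zero _ h)
      · exact h'
    · have : b ^ 2 * (q2 ^ 2 - q1 * q3) = 0 := by linear_combination (b * q2 / 2) * h0 - (b * q1 / 2) * h1
      rcases mul_eq_zero.mp this with h' | h'
      · exact absurd h' (pow_ne_zero _ h)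
      · exact h'
  have hSp : eval p (Q2 ^ 2 - Q1 * Q3) = 0 := by
    simp only [map_sub, map_pow, map_mul]; exact hS
  obtain ⟨i, hi⟩ := hΔ p hpne hSp
  apply hi
  have hd := hji i
  set D1 := eval p (pderiv i Q1)
  set D2 := eval p (pderiv i Q2)
  set D3 := eval p (pderiv i Q3)
  have hE : 2 * q2 * D2 - q3 * D1 - q1 * D3 = 0 := by
    rcases hab with h | h
    · have : a ^ 2 * (2 * q2 * D2 - q3 * D1 - q1 * D3) = 0 := by
        linear_combination ((2 * a * D2 + b * D3) / 2) * h1 - (a * D3 / 2) * h0 - q3 * hd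
      rcases mul_eq_zero.mp this with h' | h'
      · exact absurd h' (pow_ne_zero _ h)
      · exact h'
    · have : b ^ 2 * (2 * q2 * D2 - q3 * D1 - q1 * D3) = 0 := by
        linear_combination ((2 * b * D2 + a * D1) / 2) * h0 - (b * D1 / 2) * h1 - q1 * hd
      rcases mul_eq_zero.mp this with h' | h'
      · exact absurd h' (pow_ne_zero _ h)
      · exact h'
  simp only [map_sub, map_pow, map_mul, pderiv_mul, pderiv_pow, map_add, map_natCast, map_ofNat]
  push_cast
  linear_combination hE
end

section
/- Let α, β, s, λ, a, b ∈ k^* with s^2 + (2 − 4/(ab))s + 1 = 0 and ab ≠ 0. Define Q_1' and Q_3' by the matrix formula (Q_1', Q_3')^T = (1/(λ(1 − s^2)))·[[1, −s^2],[s, −s]]·(λ^2(yz+xz+xy), αyz+βxz+xy)^T, and set Q_1 = (2/a)Q_1', Q_2 = Q_1' + Q_3', Q_3 = (2/b)Q_3'. Then Q_2^2 − Q_1 Q_3 = (yz + xz + xy)(αyz + βxz + xy). -/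
/-!
STATEMENT 11: Let α, β, s, λ, a, b ∈ k* with s² + (2 − 4/(ab))s + 1 = 0 (and s² ≠ 1, which follows
from ab ≠ 1).  Define Q₁', Q₃' by
(Q₁', Q₃')ᵀ = (1/(λ(1−s²))) · [[1, −s²],[s, −s]] · (λ²(yz+xz+xy), αyz+βxz+xy)ᵀ,
and set Q₁ = (2/a)Q₁', Q₂ = Q₁' + Q₃', Q₃ = (2/b)Q₃'.  Then
Q₂² − Q₁Q₃ = (yz + xz + xy)(αyz + βxz + xy)  in k[x,y,z] = MvPolynomial (Fin 3) k
(x = X 0, y = X 1, z = X 2).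
-/

open MvPolynomial in
theorem stmt_11 {k : Type*} [Field k] [CharZero k]
    (α β s lam a b : k)
    (hα : α ≠ 0) (hβ : β ≠ 0) (hs : s ≠ 0) (hlam : lam ≠ 0) (ha : a ≠ 0) (hb : b ≠ 0)
    (hab : a * b ≠ 1) (hs2 : s ^ 2 ≠ 1)
    (hquad : s ^ 2 + (2 - 4 / (a * b)) * s + 1 = 0)
    (E1 E2 Q1' Q3' Q1 Q2 Q3 : MvPolynomial (Fin 3) k)
    (hE1 : E1 = X 1 * X 2 + X 0 * X 2 + X 0 * X 1)
    (hE2 : E2 = C α * (X 1 * X 2) + C β * (X 0 * X 2) + X 0 * X 1)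
    (hQ1' : Q1' = C (1 / (lam * (1 - s ^ 2))) * (C (lam ^ 2) * E1 - C (s ^ 2) * E2))
    (hQ3' : Q3' = C (1 / (lam * (1 - s ^ 2))) * (C (s * lam ^ 2) * E1 - C s * E2))
    (hQ1 : Q1 = C (2 / a) * Q1') (hQ2 : Q2 = Q1' + Q3') (hQ3 : Q3 = C (2 / b) * Q3') :
    Q2 ^ 2 - Q1 * Q3 = E1 * E2 := by
  have hs2' : 1 - s ^ 2 ≠ 0 := fun h => hs2 (sub_eq_zero.mp h).symm
  -- h1 : Q1' - s Q3' = lam * E1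
  have h1 : Q1' - C s * Q3' = C lam * E1 := by
    rw [hQ1', hQ3']
    have e1 : (1 / (lam * (1 - s ^ 2))) * lam ^ 2 - s * ((1 / (lam * (1 - s ^ 2))) * (s * lam ^ 2)) = lam := by
      field_simp
    calc C (1 / (lam * (1 - s ^ 2))) * (C (lam ^ 2) * E1 - C (s ^ 2) * E2) -
          C s * (C (1 / (lam * (1 - s ^ 2))) * (C (s * lam ^ 2) * E1 - C s * E2))
        = C ((1 / (lam * (1 - s ^ 2))) * lam ^ 2 - s * ((1 / (lam * (1 - s ^ 2))) * (s * lam ^ 2))) * E1 := by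
          simp only [map_mul, map_sub, map_pow]
          ring
      _ = C lam * E1 := by rw [e1]
  -- h2 : s Q1' - Q3' = (s/lam) * E2
  have h2 : C s * Q1' - Q3' = C (s / lam) * E2 := by
    rw [hQ1', hQ3']
    have e2 : (1 / (lam * (1 - s ^ 2))) * s - s * ((1 / (lam * (1 - s ^ 2))) * s ^ 2) = s / lam := by
      field_simp
    calc C s * (C (1 / (lam * (1 - s ^ 2))) * (C (lam ^ 2) * E1 - C (s ^ 2) * E2)) -
          C (1 / (lam * (1 - s ^ 2))) * (C (s * lam ^ 2) * E1 - C s * E2)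
        = C ((1 / (lam * (1 - s ^ 2))) * s - s * ((1 / (lam * (1 - s ^ 2))) * s ^ 2)) * E2 := by
          simp only [map_mul, map_sub, map_pow]
          ring
      _ = C (s / lam) * E2 := by rw [e2]
  have hsl : C lam * C (s / lam) = (C s : MvPolynomial (Fin 3) k) := by
    rw [← C_mul]
    congr 1
    field_simp
  have hqC : (C s : MvPolynomial (Fin 3) k) ^ 2 + C (2 - 4 / (a * b)) * C s + 1 = 0 := by
    have := congrArg (C : k → MvPolynomial (Fin 3) k) hquad
    simpa only [map_add, map_mul, map_pow, map_one, map_zero] using this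
  have h4 : (C (2 / a) : MvPolynomial (Fin 3) k) * C (2 / b) = 2 - C (2 - 4 / (a * b)) := by
    rw [← C_mul]
    have : (2 / a) * (2 / b) = 2 - (2 - 4 / (a * b)) := by
      field_simp
      norm_num
    rw [this, map_sub, map_ofNat]
  have hCs : (C s : MvPolynomial (Fin 3) k) ≠ 0 := by
    simpa using hs
  have key : C s * (Q2 ^ 2 - Q1 * Q3) = C s * (E1 * E2) := by
    rw [hQ1, hQ2, hQ3]
    linear_combination (C s * Q1' - Q3') * h1 + (C lam * E1) * h2 + (E1 * E2) * hsl +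
      (Q1' * Q3') * hqC - (C s * Q1' * Q3') * h4
  exact mul_left_cancel₀ hCs key
end

section
/- There is no matrix N = [[a_{00}, a_{01}],[a_{10}, a_{11}]] ∈ GL_2(ℂ) such that, for ζ a primitive 7-th root of unity, the polynomial identity t_0^2(x^2−xy+y^2+xz) + 2t_0t_1(x^2−xy+yz) + t_1^2(x^2−xz+yz+z^2) = (a_{00}t_0+a_{01}t_1)^2(x^2−ζ^3xy+ζ^6y^2+ζxz) + 2(a_{00}t_0+a_{01}t_1)(a_{10}t_0+a_{11}t_1)(x^2−ζ^2xy+ζ^4yz) + (a_{10}t_0+a_{11}t_1)^2(x^2−ζxz+ζ^4yz+ζ^2z^2) holds in ℂ[x,y,z,t_0,t_1]. -/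
/-!
STATEMENT 13: There is no matrix N = [[a₀₀,a₀₁],[a₁₀,a₁₁]] ∈ GL₂(ℂ) such that, for ζ a primitive
7-th root of unity, the stated polynomial identity holds in ℂ[x,y,z,t₀,t₁].  (This shows the
order-7 automorphism of the Klein quartic does not lift to the (2,2)-surface Z.)
Variables: x = X 0, y = X 1, z = X 2, t₀ = X 3, t₁ = X 4 in MvPolynomial (Fin 5) ℂ.
-/

open MvPolynomial in
theorem stmt_13 (ζ : ℂ) (hζ7 : ζ ^ 7 = 1) (hζ1 : ζ ≠ 1) :
    ¬ ∃ a00 a01 a10 a11 : ℂ, a00 * a11 - a01 * a10 ≠ 0 ∧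
      ((X 3 : MvPolynomial (Fin 5) ℂ) ^ 2 *
          ((X 0) ^ 2 - X 0 * X 1 + (X 1) ^ 2 + X 0 * X 2) +
        2 * X 3 * X 4 * ((X 0) ^ 2 - X 0 * X 1 + X 1 * X 2) +
        (X 4) ^ 2 * ((X 0) ^ 2 - X 0 * X 2 + X 1 * X 2 + (X 2) ^ 2)
      =
        (C a00 * X 3 + C a01 * X 4) ^ 2 *
          ((X 0) ^ 2 - C (ζ ^ 3) * (X 0 * X 1) + C (ζ ^ 6) * (X 1) ^ 2 +
            C ζ * (X 0 * X 2)) +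
        2 * (C a00 * X 3 + C a01 * X 4) * (C a10 * X 3 + C a11 * X 4) *
          ((X 0) ^ 2 - C (ζ ^ 2) * (X 0 * X 1) + C (ζ ^ 4) * (X 1 * X 2)) +
        (C a10 * X 3 + C a11 * X 4) ^ 2 *
          ((X 0) ^ 2 - C ζ * (X 0 * X 2) + C (ζ ^ 4) * (X 1 * X 2) +
            C (ζ ^ 2) * (X 2) ^ 2)) := by
  have hζ0 : ζ ≠ 0 := by
    intro h0; rw [h0] at hζ7; norm_num at hζ7
  rintro ⟨a00, a01, a10, a11, -, h⟩
  have h1 := congrArg (eval (![0, 1, 0, 1, 0] : Fin 5 → ℂ)) h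
  have h2 := congrArg (eval (![0, 1, 0, 0, 1] : Fin 5 → ℂ)) h
  have h3 := congrArg (eval (![0, 0, 1, 1, 0] : Fin 5 → ℂ)) h
  have h4 := congrArg (eval (![1, 0, 0, 1, 1] : Fin 5 → ℂ)) h
  have h5 := congrArg (eval (![1, 0, 0, 1, -1] : Fin 5 → ℂ)) h
  simp only [map_add, map_sub, map_mul, map_pow, map_ofNat, eval_X, eval_C,
    Matrix.cons_val_zero, Matrix.cons_val_one, Matrix.head_cons,
    Matrix.cons_val_two, Matrix.tail_cons, Matrix.cons_val_three,
    Matrix.cons_val_four] at h1 h2 h3 h4 h5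
  ring_nf at h1 h2 h3 h4 h5
  have hz6 : ζ ^ 6 ≠ 0 := pow_ne_zero _ hζ0
  have hz2 : ζ ^ 2 ≠ 0 := pow_ne_zero _ hζ0
  have ha01 : a01 = 0 := by
    rcases mul_eq_zero.mp h2.symm with hh | hh
    · exact pow_eq_zero_iff (two_ne_zero).symm.symm |>.mp hh
    · exact absurd hh hz6
  have ha10 : a10 = 0 := by
    rcases mul_eq_zero.mp h3.symm with hh | hh
    · exact absurd hh hz2
    · exact pow_eq_zero_iff (two_ne_zero).symm.symm |>.mp hh
  subst ha01 ha10
  have h6 : (a00 - a11) ^ 2 = 0 := by linear_combination -h5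
  have h7 : a00 = a11 := by
    have := pow_eq_zero_iff (two_ne_zero) |>.mp h6
    exact sub_eq_zero.mp this
  subst h7
  have h8 : a00 ^ 2 = 1 := by linear_combination -h4 / 4
  have h9 : ζ ^ 6 = 1 := by linear_combination -h1 - ζ ^ 6 * h8
  exact hζ1 (by linear_combination hζ7 - ζ * h9)
end
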